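/- arXiv:2404.15652 — 3 statements merged into one kernel-verified Lean document; each statement's English description precedes it below -/
import Mathlib

section
/- Let X be a connected graph, g an automorphism of X, and A a set of vertices with g·A = A (setwise). Suppose x is a vertex with d(x,A) ≥ 1 and suppose that some geodesic from a vertex a ∈ A realizing d(x,A) to x contains an edge [e₁,e₂] (traversed in this order from a to x) such that g·e₂ = e₁. Then d(g·x, A) < d(x, A). -/
/-! Follow the geodesic from `a` to `e₁`, then the image under `g` of its part from `e₂` to `x`,
which starts at `g e₂ = e₁` and ends at `g x`. This walk from `a ∈ A` to `g x` skips the edge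
`[e₁, e₂]`, so it is one step shorter than `d(a, x) = d(x, A)`. -/

namespace SimpleGraph

variable {V : Type*} {G : SimpleGraph V}

theorem dist_map_lt_of_folds_geodesic_edge (f : G →g G) {a u v x : V} (p : G.Walk a u)
    (huv : G.Adj u v) (q : G.Walk v x) (hgeo : (p.append (.cons huv q)).length = G.dist a x)
    (hf : f v = u) : G.dist a (f x) < G.dist a x := by
  let folded : G.Walk a (f x) := p.append ((q.map f).copy hf rfl)
  have hfolded : folded.length = p.length + q.length := by
    simp only [folded, Walk.length_append, Walk.length_copy, Walk.length_map]
  have hlen : p.length + q.length + 1 = G.dist a x := by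
    rw [← hgeo, Walk.length_append, Walk.length_cons]; omega
  exact (hfolded ▸ dist_le folded).trans_lt (by omega)

end SimpleGraph

theorem rotate_closer_general {V : Type*} (G : SimpleGraph V)
    (g : G ≃g G) (A : Set V)
    (x : V)
    (a : V) (ha : a ∈ A) (hreal : G.dist a x = sInf ((fun z => G.dist x z) '' A))
    (w : G.Walk a x) (hw : w.length = G.dist a x)
    (e₁ e₂ : V) (hadj : G.Adj e₁ e₂)
    (w₁ : G.Walk a e₁) (w₂ : G.Walk e₂ x)
    (hdec : w = w₁.append (SimpleGraph.Walk.cons hadj w₂))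
    (hge : g e₂ = e₁) :
    sInf ((fun z => G.dist (g x) z) '' A) < sInf ((fun z => G.dist x z) '' A) := by
  subst hdec
  calc sInf ((fun z => G.dist (g x) z) '' A) ≤ G.dist (g x) a := Nat.sInf_le ⟨a, ha, rfl⟩
    _ = G.dist a (g.toHom x) := SimpleGraph.dist_comm
    _ < G.dist a x := SimpleGraph.dist_map_lt_of_folds_geodesic_edge g.toHom w₁ hadj w₂ hw hge
    _ = sInf ((fun z => G.dist x z) '' A) := hreal

/-- If an automorphism g stabilises A setwise and folds an edge of a geodesic from A to x
(i.e. g·e₂ = e₁ for an edge [e₁,e₂] of a geodesic from a point of A realising d(x,A) to x),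
then d(g·x, A) < d(x, A). -/
theorem rotate_closer {V : Type*} (G : SimpleGraph V) (hG : G.Connected)
    (g : G ≃g G) (A : Set V) (hA : (⇑g) '' A = A)
    (x : V) (hx : 1 ≤ sInf ((fun z => G.dist x z) '' A))
    (a : V) (ha : a ∈ A) (hreal : G.dist a x = sInf ((fun z => G.dist x z) '' A))
    (w : G.Walk a x) (hw : w.length = G.dist a x)
    (e₁ e₂ : V) (hadj : G.Adj e₁ e₂)
    (w₁ : G.Walk a e₁) (w₂ : G.Walk e₂ x)
    (hdec : w = w₁.append (SimpleGraph.Walk.cons hadj w₂))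
    (hge : g e₂ = e₁) :
    sInf ((fun z => G.dist (g x) z) '' A) < sInf ((fun z => G.dist x z) '' A) :=
  rotate_closer_general G g A x a ha hreal w hw e₁ e₂ hadj w₁ w₂ hdec hge
end

section
/- A retract of a residually finite group is separable: let G be a residually finite group and ρ : G → G a homomorphism with ρ∘ρ = ρ, and let H = ρ(G) be its image. Then for every g ∈ G with g ∉ H, there exists a finite group Q and a homomorphism φ : G → Q such that φ(g) ∉ φ(H). -/
/-!
If `g ∉ ρ(G)` then `g ≠ ρ g`, so residual finiteness gives a finite quotient `φ` with
`φ g ≠ φ (ρ g)`. The pair `(φ, φ ∘ ρ)` then separates `g` from `ρ(G)`: it agrees on both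
coordinates at every point of `ρ(G)`, since `ρ` fixes `ρ(G)`, but not at `g`.
-/

namespace MonoidHom

variable {G Q : Type*} [Group G] [Group Q] {ρ : G →* G}

theorem apply_eq_self_of_comp_self_of_mem_range (hρ : ρ.comp ρ = ρ) {h : G}
    (hh : h ∈ ρ.range) : ρ h = h := by
  obtain ⟨k, rfl⟩ := hh
  exact DFunLike.congr_fun hρ k

theorem prod_comp_apply_notMem_image_range (hρ : ρ.comp ρ = ρ) (φ : G →* Q) {g : G}
    (hφ : φ g ≠ φ (ρ g)) : φ.prod (φ.comp ρ) g ∉ φ.prod (φ.comp ρ) '' (ρ.range : Set G) := by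
  rintro ⟨h, hh, heq⟩
  have hfix : ρ h = h := apply_eq_self_of_comp_self_of_mem_range hρ hh
  simp only [prod_apply, comp_apply, Prod.mk.injEq, hfix] at heq
  exact hφ (heq.1.symm.trans heq.2)

end MonoidHom

/-- A retract of a residually finite group is separable. -/
theorem retract_separable {G : Type*} [Group G]
    (hrf : ∀ x : G, x ≠ 1 → ∃ (Q : Type) (_ : Group Q) (_ : Finite Q) (φ : G →* Q), φ x ≠ 1)
    (ρ : G →* G) (hρ : ρ.comp ρ = ρ) (g : G) (hg : g ∉ ρ.range) :
    ∃ (Q : Type) (_ : Group Q) (_ : Finite Q) (φ : G →* Q),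
      φ g ∉ φ '' (ρ.range : Set G) := by
  have hne : g * (ρ g)⁻¹ ≠ 1 := fun h => hg ⟨g, (mul_inv_eq_one.mp h).symm⟩
  obtain ⟨Q, _, _, φ, hφ⟩ := hrf _ hne
  have hsep : φ g ≠ φ (ρ g) := by
    rwa [map_mul, map_inv, Ne, mul_inv_eq_one] at hφ
  exact ⟨Q × Q, inferInstance, inferInstance, φ.prod (φ.comp ρ),
    MonoidHom.prod_comp_apply_notMem_image_range hρ φ hsep⟩
end

section
/- A virtual retract of a residually finite group is separable: let G be a residually finite group, K ≤ G a finite-index subgroup, and ρ : K → K an idempotent endomorphism with image H = ρ(K). Then for every g ∈ G with g ∉ H, there exists a finite group Q and a homomorphism φ : G → Q such that φ(g) ∉ φ(H). -/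
/-!
Inside `K`, the retract `ρ(K)` is the set of fixed points of `ρ`, so if `k ∉ ρ(K)` then
`k ≠ ρ k`. Residual finiteness (inherited by `K`) gives a finite quotient `q` of `K` with
`q k ≠ q (ρ k)`, and the equalizer of `q` and `q ∘ ρ` is a finite-index subgroup containing
`ρ(K)` but not `k`. Finite-index subgroups of `K` have finite index in `G`, and a finite-index
subgroup `L ∌ g` yields the finite quotient `G ⧸ L.normalCore` in which `g` stays outside the
image of `L`.
-/

namespace Subgroup

variable {G : Type*} [Group G]

def IsSeparable (H : Subgroup G) : Prop :=
  ∀ g ∉ H, ∃ L : Subgroup G, L.FiniteIndex ∧ H ≤ L ∧ g ∉ L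

theorem IsSeparable.exists_finite_quotient_notMem_image {H : Subgroup G} (hH : H.IsSeparable)
    {g : G} (hg : g ∉ H) :
    ∃ (Q : Type) (_ : Group Q) (_ : Finite Q) (φ : G →* Q), φ g ∉ φ '' (H : Set G) := by
  obtain ⟨L, hL, hHL, hgL⟩ := hH g hg
  set φ : G →* Shrink.{0} (G ⧸ L.normalCore) :=
    (Shrink.mulEquiv : Shrink.{0} (G ⧸ L.normalCore) ≃* _).symm.toMonoidHom.comp
      (QuotientGroup.mk' L.normalCore)
  have hker : φ.ker ≤ L := by
    rw [MonoidHom.ker_comp_of_injective _ _ Shrink.mulEquiv.symm.injective,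
      QuotientGroup.ker_mk']
    exact L.normalCore_le
  refine ⟨_, inferInstance, inferInstance, φ, fun hφg => hgL ?_⟩
  rw [← comap_map_eq_self hker]
  exact Set.image_mono hHL hφg

theorem IsSeparable.map_subtype {K : Subgroup G} [K.FiniteIndex] {H : Subgroup K}
    (hH : H.IsSeparable) : (H.map K.subtype).IsSeparable := by
  intro g hg
  by_cases hgK : g ∈ K
  · obtain ⟨L, hL, hHL, hgL⟩ := hH ⟨g, hgK⟩ fun h => hg ⟨_, h, rfl⟩
    refine ⟨L.map K.subtype, ⟨?_⟩, map_mono hHL, ?_⟩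
    · rw [index_map_subtype]
      exact mul_ne_zero hL.index_ne_zero FiniteIndex.index_ne_zero
    · rintro ⟨x, hx, rfl⟩
      exact hgL hx
  · exact ⟨K, inferInstance, map_subtype_le H, hgK⟩

end Subgroup

namespace MonoidHom

variable {G M : Type*} [Group G]

theorem finiteIndex_eqLocus [Group M] [Finite M] (f g : G →* M) : (f.eqLocus g).FiniteIndex :=
  Subgroup.finiteIndex_of_le (H := f.ker ⊓ g.ker) fun _ hx =>
    (mem_ker.mp hx.1).trans (mem_ker.mp hx.2).symm

theorem range_le_eqLocus_comp_of_comp_self {ρ : G →* G} (hρ : ρ.comp ρ = ρ) [Monoid M]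
    (f : G →* M) : ρ.range ≤ f.eqLocus (f.comp ρ) := by
  rintro _ ⟨x, rfl⟩
  exact congrArg f (DFunLike.congr_fun hρ x).symm

theorem isSeparable_range_of_comp_self [Group.ResiduallyFinite G] {ρ : G →* G}
    (hρ : ρ.comp ρ = ρ) : ρ.range.IsSeparable := by
  intro g hg
  have hgρ : g ≠ ρ g := fun h => hg ⟨g, h.symm⟩
  obtain ⟨N, hN⟩ := Group.exists_finiteIndexNormalSubgroup_of_residuallyFinite g (ρ g) hgρ
  let q := QuotientGroup.mk' N.toSubgroup
  exact ⟨q.eqLocus (q.comp ρ), q.finiteIndex_eqLocus _,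
    range_le_eqLocus_comp_of_comp_self hρ q, hN⟩

end MonoidHom

/-- A virtual retract of a residually finite group is separable. -/
theorem virtual_retract_separable {G : Type*} [Group G]
    (hrf : ∀ x : G, x ≠ 1 → ∃ (Q : Type) (_ : Group Q) (_ : Finite Q) (φ : G →* Q), φ x ≠ 1)
    (K : Subgroup G) (hK : K.FiniteIndex) (ρ : K →* K) (hρ : ρ.comp ρ = ρ)
    (g : G) (hg : g ∉ Subgroup.map K.subtype ρ.range) :
    ∃ (Q : Type) (_ : Group Q) (_ : Finite Q) (φ : G →* Q),
      φ g ∉ φ '' ((Subgroup.map K.subtype ρ.range : Subgroup G) : Set G) := by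
  have : Group.ResiduallyFinite G := Group.residuallyFinite_of_forall_exists_finite_monoidHom hrf
  exact (ρ.isSeparable_range_of_comp_self hρ).map_subtype.exists_finite_quotient_notMem_image hg
end
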